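/- Let Y be a random variable with E[Y] = 0 and E[|Y|^{2+κ}]^{1/(2+κ)} ≤ σ for some κ ≥ 0 and σ > 0. Then for any τ > 0, |E[φ_τ(Y)]| ≤ σ · (σ^{1+κ} / τ^{1+κ}), i.e., |E[φ_τ(Y)]| ≤ σ^{2+κ}/τ^{1+κ}. -/
import Mathlib


open MeasureTheory

/-- The clipping function `φ_τ(x) = max(-τ, min(τ, x))`. -/
noncomputable def clip (τ x : ℝ) : ℝ := max (-τ) (min τ x)

lemma abs_clip_le (τ x : ℝ) (hτ : 0 ≤ τ) : |clip τ x| ≤ |x| := by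
  unfold clip
  rw [abs_le]
  constructor
  · exact le_max_of_le_right (le_min (by
      have := abs_nonneg x; linarith) (neg_abs_le x))
  · exact max_le (by have := abs_nonneg x; linarith)
      ((min_le_right _ _).trans (le_abs_self x))

lemma clip_diff_le (τ x κ : ℝ) (hτ : 0 < τ) (hκ : 0 ≤ κ) :
    |clip τ x - x| ≤ |x| ^ (2 + κ) / τ ^ (1 + κ) := by
  rcases le_or_gt |x| τ with h | h
  · have h1 : x ≤ τ := (le_abs_self x).trans h
    have h2 : -τ ≤ x := by have := neg_abs_le x; linarith
    have : clip τ x = x := by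
      unfold clip; rw [min_eq_right h1, max_eq_right h2]
    rw [this, sub_self, abs_zero]
    positivity
  · have hx : 0 < |x| := hτ.trans h
    have hdiff : |clip τ x - x| ≤ |x| := by
      unfold clip
      rcases abs_cases x with ⟨hx1, hx2⟩ | ⟨hx1, hx2⟩
      · rw [min_eq_left (by linarith), max_eq_right (by linarith),
          abs_of_nonpos (by linarith)]
        linarith
      · rw [min_eq_right (by linarith), max_eq_left (by linarith),
          abs_of_nonneg (by linarith)]
        linarith
    have key : |x| ≤ |x| ^ (2 + κ) / τ ^ (1 + κ) := by
      rw [le_div_iff₀ (by positivity)]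
      have h1 : τ ^ (1 + κ) ≤ |x| ^ (1 + κ) :=
        Real.rpow_le_rpow hτ.le h.le (by linarith)
      calc |x| * τ ^ (1 + κ) ≤ |x| * |x| ^ (1 + κ) :=
            mul_le_mul_of_nonneg_left h1 hx.le
        _ = |x| ^ (2 + κ) := by
            rw [show (2 : ℝ) + κ = 1 + (1 + κ) by ring,
              Real.rpow_add hx 1 (1 + κ), Real.rpow_one]
    exact hdiff.trans key

/-- if `E[Y] = 0` and `E[|Y|^{2+κ}]^{1/(2+κ)} ≤ σ` with `κ ≥ 0`, `σ > 0`,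
then for any `τ > 0`, `|E[φ_τ(Y)]| ≤ σ^{2+κ}/τ^{1+κ}`. -/
theorem abs_expectation_clip_le {Ω : Type*} [MeasurableSpace Ω] (μ : Measure Ω)
    [IsProbabilityMeasure μ] (Y : Ω → ℝ) (κ σ τ : ℝ)
    (hκ : 0 ≤ κ) (hσ : 0 < σ) (hτ : 0 < τ)
    (hmeas : Measurable Y)
    (hint : Integrable Y μ)
    (hmom : Integrable (fun ω => |Y ω| ^ (2 + κ)) μ)
    (hmean : ∫ ω, Y ω ∂μ = 0)
    (hbound : (∫ ω, |Y ω| ^ (2 + κ) ∂μ) ^ (1 / (2 + κ)) ≤ σ) :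
    |∫ ω, clip τ (Y ω) ∂μ| ≤ σ ^ (2 + κ) / τ ^ (1 + κ) := by
  have h2κ : (0:ℝ) < 2 + κ := by linarith
  set M := ∫ ω, |Y ω| ^ (2 + κ) ∂μ with hMdef
  have hMnn : 0 ≤ M := integral_nonneg fun ω => Real.rpow_nonneg (abs_nonneg _) _
  have hmomb : M ≤ σ ^ (2 + κ) := by
    have h := Real.rpow_le_rpow (Real.rpow_nonneg hMnn _) hbound h2κ.le
    rwa [← Real.rpow_mul hMnn, one_div, inv_mul_cancel₀ h2κ.ne', Real.rpow_one] at h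
  have hclip_meas : AEStronglyMeasurable (fun ω => clip τ (Y ω)) μ :=
    (Measurable.max measurable_const
      (Measurable.min measurable_const hmeas)).aestronglyMeasurable
  have hclip_int : Integrable (fun ω => clip τ (Y ω)) μ :=
    hint.mono hclip_meas (ae_of_all _ fun ω => by
      simpa [Real.norm_eq_abs] using abs_clip_le τ (Y ω) hτ.le)
  calc |∫ ω, clip τ (Y ω) ∂μ| = |∫ ω, (clip τ (Y ω) - Y ω) ∂μ| := by
        rw [integral_sub hclip_int hint, hmean, sub_zero]
    _ ≤ ∫ ω, |clip τ (Y ω) - Y ω| ∂μ := by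
        simpa [Real.norm_eq_abs] using
          norm_integral_le_integral_norm (fun ω => clip τ (Y ω) - Y ω) (μ := μ)
    _ ≤ ∫ ω, |Y ω| ^ (2 + κ) / τ ^ (1 + κ) ∂μ :=
        integral_mono ((hclip_int.sub hint).abs) (hmom.div_const _)
          (fun ω => clip_diff_le τ (Y ω) κ hτ hκ)
    _ = M / τ ^ (1 + κ) := by rw [integral_div]
    _ ≤ σ ^ (2 + κ) / τ ^ (1 + κ) := by
        gcongr
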